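/- arXiv:1205.2812 — 2 statements merged into one kernel-verified Lean document; each statement's English description precedes it below -/
import Mathlib

section
/- Let (X, 𝔄, μ) be a measure space with 0 < μ(X) < ∞, and let (φ_j) be a sequence of real-valued, square μ-integrable functions which is L^∞ quantum ergodic, i.e. for every bounded measurable g : X → ℝ one has ∫_X g φ_j² dμ → ∫_X g dμ as j → ∞. Then liminf_{j→∞} ∫_X |φ_j| dμ > 0; equivalently, there exist ε > 0 and J ∈ ℕ such that ∫_X |φ_j| dμ ≥ ε for all j ≥ J. -/
open MeasureTheory Filter Topology

/-!
If `∫ |φ_j|` had a subsequence tending to zero, one could pick it with summable `L¹` norms.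
By Markov's inequality the union `T` of the sets `{|φ_{n_k}| ≥ 1}` then has measure less than
`μ X`, so `S = Tᶜ` has positive measure. On `S` every `φ_{n_k}` is bounded by `1`, so
`∫_S φ_{n_k}² ≤ ∫ |φ_{n_k}| → 0`, contradicting `∫_S φ_{n_k}² → μ S` given by quantum ergodicity
with `g = 𝟙_S`.
-/

section

variable {X : Type*} [MeasurableSpace X] {μ : Measure X}

theorem measure_one_le_abs_le_ofReal_integral_abs {f : X → ℝ} (hf : Integrable f μ) :
    μ {x | 1 ≤ |f x|} ≤ ENNReal.ofReal (∫ x, |f x| ∂μ) := by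
  have hmarkov := mul_meas_ge_le_lintegral₀ hf.aestronglyMeasurable.enorm 1
  simp only [one_mul, ← ofReal_norm, ENNReal.one_le_ofReal, Real.norm_eq_abs] at hmarkov
  rwa [ofReal_integral_eq_lintegral_ofReal hf.abs (ae_of_all _ fun x => abs_nonneg _)]

theorem exists_measurableSet_measure_ne_zero_forall_abs_lt_one {f : ℕ → X → ℝ}
    (hf : ∀ k, Integrable (f k) μ)
    (hsum : ∑' k, ENNReal.ofReal (∫ x, |f k x| ∂μ) < μ Set.univ) :
    ∃ S, MeasurableSet S ∧ μ S ≠ 0 ∧ ∀ k, ∀ x ∈ S, |f k x| < 1 := by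
  set T := toMeasurable μ (⋃ k, {x | 1 ≤ |f k x|})
  have hT : μ T < μ Set.univ := by
    calc μ T = μ (⋃ k, {x | 1 ≤ |f k x|}) := measure_toMeasurable _
      _ ≤ ∑' k, μ {x | 1 ≤ |f k x|} := measure_iUnion_le _
      _ ≤ ∑' k, ENNReal.ofReal (∫ x, |f k x| ∂μ) :=
        ENNReal.tsum_le_tsum fun k => measure_one_le_abs_le_ofReal_integral_abs (hf k)
      _ < μ Set.univ := hsum
  refine ⟨Tᶜ, (measurableSet_toMeasurable _ _).compl, fun hTc => ?_, fun k x hx => ?_⟩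
  · have := measure_univ_le_add_compl (μ := μ) T
    rw [hTc, add_zero] at this
    exact hT.not_ge this
  · by_contra! hk
    exact hx (subset_toMeasurable _ _ (Set.mem_iUnion.2 ⟨k, hk⟩))

theorem integral_indicator_one_mul_sq_le_integral_abs {f : X → ℝ} (hf : Integrable f μ)
    {S : Set X} (hS : MeasurableSet S) (hfS : ∀ x ∈ S, |f x| ≤ 1) :
    ∫ x, S.indicator 1 x * f x ^ 2 ∂μ ≤ ∫ x, |f x| ∂μ := by
  have hle : ∀ x, ‖S.indicator 1 x * f x ^ 2‖ ≤ |f x| := by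
    intro x
    by_cases hx : x ∈ S
    · simp only [hx, Set.indicator_of_mem, Pi.one_apply, one_mul, norm_pow, Real.norm_eq_abs]
      nlinarith [abs_nonneg (f x), hfS x hx]
    · simp [hx]
  have hint : Integrable (fun x => S.indicator 1 x * f x ^ 2) μ :=
    hf.abs.mono' ((measurable_const.indicator hS).aestronglyMeasurable.mul
      (hf.aestronglyMeasurable.pow 2)) (ae_of_all _ hle)
  exact integral_mono hint hf.abs fun x => (le_abs_self _).trans (hle x)

end

/-- **L^∞ quantum ergodicity implies a uniform lower bound on L¹ norms.**
Let (X, μ) be a measure space with 0 < μ(X) < ∞ and let (φ_j) be a sequence of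
real-valued square-integrable functions which is L^∞ quantum ergodic, i.e.
∫ g φ_j² dμ → ∫ g dμ for every bounded measurable g. Then there exist ε > 0 and
J ∈ ℕ with ∫ |φ_j| dμ ≥ ε for all j ≥ J. -/
theorem liminf_L1_pos_of_Linfty_quantum_ergodic
    {X : Type*} [MeasurableSpace X] (μ : Measure X)
    (hpos : 0 < μ Set.univ) (hfin : μ Set.univ < ⊤)
    (φ : ℕ → X → ℝ)
    (hL2 : ∀ j, MemLp (φ j) 2 μ)
    (hQE : ∀ g : X → ℝ, Measurable g → (∃ C : ℝ, ∀ x, |g x| ≤ C) →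
      Tendsto (fun j => ∫ x, g x * (φ j x) ^ 2 ∂μ) atTop (𝓝 (∫ x, g x ∂μ))) :
    ∃ ε > (0 : ℝ), ∃ J : ℕ, ∀ j ≥ J, ε ≤ ∫ x, |φ j x| ∂μ := by
  by_contra! hsmall
  have : IsFiniteMeasure μ := ⟨hfin⟩
  have hint : ∀ j, Integrable (φ j) μ := fun j => (hL2 j).integrable one_le_two
  obtain ⟨ε, hεpos, hεsum⟩ := ENNReal.exists_pos_sum_of_countable hpos.ne' ℕ
  choose n hn hφn using fun k => hsmall (ε k) (hεpos k) k
  obtain ⟨S, hS, hS0, hφS⟩ := exists_measurableSet_measure_ne_zero_forall_abs_lt_one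
    (f := fun k => φ (n k)) (fun k => hint (n k))
    (hεsum.trans_le' <| ENNReal.tsum_le_tsum fun k => by
      simpa using ENNReal.ofReal_le_ofReal (hφn k).le)
  have hlim := (hQE (S.indicator 1) (measurable_const.indicator hS)
    ⟨1, fun x => by by_cases hx : x ∈ S <;> simp [hx]⟩).comp (tendsto_atTop_mono hn tendsto_id)
  rw [integral_indicator_one hS] at hlim
  have hε0 : Tendsto (fun k => (ε k : ℝ)) atTop (𝓝 0) :=
    NNReal.tendsto_coe.2 <| NNReal.tendsto_atTop_zero_of_summable <|
      ENNReal.tsum_coe_ne_top_iff_summable.1 (hεsum.trans hfin).ne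
  have hS_nonpos : μ.real S ≤ 0 := le_of_tendsto_of_tendsto' hlim hε0 fun k =>
    (integral_indicator_one_mul_sq_le_integral_abs (hint (n k)) hS
      fun x hx => (hφS k x hx).le).trans (hφn k).le
  exact hS_nonpos.not_gt (ENNReal.toReal_pos hS0 (measure_ne_top μ S))
end

section
/- Let X be a compact metric space and ν a finite Borel measure on X. Let (φ_j) be a sequence of Borel measurable, square ν-integrable real functions that is quantum ergodic on the base, i.e. ∫_X f φ_j² dν → ∫_X f dν for every continuous f : X → ℝ. Suppose that along some subsequence (j_k) the measures E ↦ ∫_E |φ_{j_k}| dν converge weak* (i.e. when integrated against every continuous function) to a finite Borel measure μ on X. Then μ is absolutely continuous with respect to ν. -/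
/-!
For `f ≥ 0`, Cauchy–Schwarz applied to `√f` and `√f |φ|` gives
`∫ f |φ_j| dν ≤ (∫ f dν)^{1/2} (∫ f φ_j² dν)^{1/2}`, and quantum ergodicity sends the right-hand
side to `∫ f dν`. Hence `∫ f dμ ≤ ∫ f dν` for every nonnegative continuous `f`, so `μ ≤ ν` on closed
sets (approximate indicators from above by continuous functions) and, by inner regularity, on all
Borel sets. In particular `μ ≪ ν`.
-/

open MeasureTheory Filter Topology TopologicalSpace
open scoped NNReal BoundedContinuousFunction

namespace MeasureTheory

variable {Ω : Type*} [MeasurableSpace Ω] {μ ν : Measure Ω}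

theorem integral_mul_abs_le_sqrt_mul_sqrt {f g : Ω → ℝ} (hf : 0 ≤ f) (hfi : Integrable f μ)
    (hg : AEStronglyMeasurable g μ) (hfg : Integrable (fun x => f x * g x ^ 2) μ) :
    ∫ x, f x * |g x| ∂μ ≤ √(∫ x, f x ∂μ) * √(∫ x, f x * g x ^ 2 ∂μ) := by
  have hsqrt : AEStronglyMeasurable (fun x => √(f x)) μ :=
    hfi.aestronglyMeasurable.aemeasurable.sqrt.aestronglyMeasurable
  have hf2 : MemLp (fun x => √(f x)) (ENNReal.ofReal 2) μ := by
    rw [ENNReal.ofReal_ofNat, memLp_two_iff_integrable_sq hsqrt]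
    simpa only [Real.sq_sqrt (hf _)] using hfi
  have hfg2 : MemLp (fun x => √(f x) * |g x|) (ENNReal.ofReal 2) μ := by
    rw [ENNReal.ofReal_ofNat, memLp_two_iff_integrable_sq (f := fun x => √(f x) * |g x|)
      (hsqrt.mul (continuous_abs.comp_aestronglyMeasurable hg))]
    simpa only [mul_pow, sq_abs, Real.sq_sqrt (hf _)] using hfg
  have H := integral_mul_le_Lp_mul_Lq_of_nonneg Real.HolderConjugate.two_two
    (ae_of_all _ fun x => Real.sqrt_nonneg (f x))
    (ae_of_all _ fun x => mul_nonneg (Real.sqrt_nonneg (f x)) (abs_nonneg (g x))) hf2 hfg2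
  simpa only [Real.rpow_two, mul_pow, sq_abs, Real.sq_sqrt (hf _), ← mul_assoc,
    Real.mul_self_sqrt (hf _), ← Real.sqrt_eq_rpow] using H

theorem measure_isClosed_le_of_forall_lintegral_le [TopologicalSpace Ω] [HasOuterApproxClosed Ω]
    [OpensMeasurableSpace Ω] [IsFiniteMeasure ν]
    (h : ∀ f : Ω →ᵇ ℝ≥0, ∫⁻ x, f x ∂μ ≤ ∫⁻ x, f x ∂ν) {F : Set Ω} (hF : IsClosed F) :
    μ F ≤ ν F :=
  ge_of_tendsto' (HasOuterApproxClosed.tendsto_lintegral_apprSeq hF ν) fun n =>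
    (HasOuterApproxClosed.measure_le_lintegral hF μ n).trans (h _)

theorem Measure.le_of_forall_lintegral_le [TopologicalSpace Ω] [PseudoMetrizableSpace Ω]
    [BorelSpace Ω] [IsFiniteMeasure μ] [IsFiniteMeasure ν]
    (h : ∀ f : Ω →ᵇ ℝ≥0, ∫⁻ x, f x ∂μ ≤ ∫⁻ x, f x ∂ν) : μ ≤ ν := by
  refine Measure.le_iff.2 fun E hE => ?_
  rw [hE.measure_eq_iSup_isClosed_of_ne_top (measure_ne_top μ E)]
  exact iSup₂_le fun F hFE => iSup_le fun hF =>
    (measure_isClosed_le_of_forall_lintegral_le h hF).trans (measure_mono hFE)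

theorem Measure.le_of_forall_integral_le [TopologicalSpace Ω] [PseudoMetrizableSpace Ω]
    [BorelSpace Ω] [IsFiniteMeasure μ] [IsFiniteMeasure ν]
    (h : ∀ f : Ω →ᵇ ℝ, 0 ≤ f → ∫ x, f x ∂μ ≤ ∫ x, f x ∂ν) : μ ≤ ν := by
  refine Measure.le_of_forall_lintegral_le fun f => ?_
  rw [← ENNReal.toReal_le_toReal (BoundedContinuousFunction.lintegral_lt_top_of_nnreal μ f).ne
      (BoundedContinuousFunction.lintegral_lt_top_of_nnreal ν f).ne,
    BoundedContinuousFunction.toReal_lintegral_coe_eq_integral,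
    BoundedContinuousFunction.toReal_lintegral_coe_eq_integral]
  exact h (.comp _ (LipschitzWith.subtype_val _) f) fun x => (f x).2

end MeasureTheory

theorem absolutelyContinuous_of_weakStar_limit_quantum_ergodic_general
    {X : Type*} [MetricSpace X] [CompactSpace X] [MeasurableSpace X] [BorelSpace X]
    (ν : Measure X) [IsFiniteMeasure ν]
    (φ : ℕ → X → ℝ)
    (hL2 : ∀ j, MemLp (φ j) 2 ν)
    (hQE : ∀ f : C(X, ℝ), Tendsto (fun j => ∫ x, f x * (φ j x) ^ 2 ∂ν)
      atTop (𝓝 (∫ x, f x ∂ν)))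
    (j : ℕ → ℕ) (hj : StrictMono j)
    (μ : Measure X) [IsFiniteMeasure μ]
    (hconv : ∀ f : C(X, ℝ), Tendsto (fun k => ∫ x, f x * |φ (j k) x| ∂ν)
      atTop (𝓝 (∫ x, f x ∂μ))) :
    μ ≪ ν := by
  refine Measure.absolutelyContinuous_of_le (Measure.le_of_forall_integral_le fun f hf => ?_)
  have hf0 : ∀ x, 0 ≤ f x := hf
  have hCS (k : ℕ) : ∫ x, f x * |φ (j k) x| ∂ν ≤
      √(∫ x, f x ∂ν) * √(∫ x, f x * φ (j k) x ^ 2 ∂ν) :=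
    integral_mul_abs_le_sqrt_mul_sqrt hf0 (f.integrable ν) (hL2 _).1
      ((hL2 _).integrable_sq.bdd_mul f.continuous.aestronglyMeasurable
        (ae_of_all _ f.norm_coe_le_norm))
  have hlim : Tendsto (fun k => √(∫ x, f x ∂ν) * √(∫ x, f x * φ (j k) x ^ 2 ∂ν))
      atTop (𝓝 (∫ x, f x ∂ν)) := by
    have hQE' : Tendsto (fun k => ∫ x, f x * φ (j k) x ^ 2 ∂ν) atTop (𝓝 (∫ x, f x ∂ν)) :=
      (hQE f.toContinuousMap).comp hj.tendsto_atTop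
    have := hQE'.sqrt.const_mul √(∫ x, f x ∂ν)
    rwa [Real.mul_self_sqrt (integral_nonneg hf0)] at this
  exact le_of_tendsto_of_tendsto' (hconv f.toContinuousMap) hlim hCS

/-- **Weak* limits of |φ_j| dν along a quantum ergodic sequence are absolutely
continuous.** Let X be a compact metric space, ν a finite Borel measure, and
(φ_j) a sequence of measurable square-integrable real functions which is quantum
ergodic on the base: ∫ f φ_j² dν → ∫ f dν for every continuous f. If along a
subsequence the measures E ↦ ∫_E |φ_{j_k}| dν converge weak* to a finite Borel
measure μ, then μ ≪ ν. -/
theorem absolutelyContinuous_of_weakStar_limit_quantum_ergodic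
    {X : Type*} [MetricSpace X] [CompactSpace X] [MeasurableSpace X] [BorelSpace X]
    (ν : Measure X) [IsFiniteMeasure ν]
    (φ : ℕ → X → ℝ)
    (hmeas : ∀ j, Measurable (φ j))
    (hL2 : ∀ j, MemLp (φ j) 2 ν)
    (hQE : ∀ f : C(X, ℝ), Tendsto (fun j => ∫ x, f x * (φ j x) ^ 2 ∂ν)
      atTop (𝓝 (∫ x, f x ∂ν)))
    (j : ℕ → ℕ) (hj : StrictMono j)
    (μ : Measure X) [IsFiniteMeasure μ]
    (hconv : ∀ f : C(X, ℝ), Tendsto (fun k => ∫ x, f x * |φ (j k) x| ∂ν)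
      atTop (𝓝 (∫ x, f x ∂μ))) :
    μ ≪ ν :=
  absolutelyContinuous_of_weakStar_limit_quantum_ergodic_general ν φ hL2 hQE j hj μ hconv
end
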